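/- arXiv:0709.3796 — 4 statements merged into one kernel-verified Lean document; each statement's English description precedes it below -/
import Mathlib

section
/- Let λ ≥ 0 and let f : [0, ∞) → ℝ be differentiable with f'(t) ≤ f(t)² − λ² for all t ≥ 0. If f(0) ≤ −λ, then f(t) ≤ −λ for all t ≥ 0. -/
/-- Lemma 2 of the paper: scalar differential inequality. -/
theorem stmt0 (lam : ℝ) (hlam : 0 ≤ lam) (f : ℝ → ℝ)
    (hf : ∀ t, 0 ≤ t → DifferentiableAt ℝ f t)
    (hineq : ∀ t, 0 ≤ t → deriv f t ≤ f t ^ 2 - lam ^ 2)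
    (h0 : f 0 ≤ -lam) :
    ∀ t, 0 ≤ t → f t ≤ -lam := by
  intro t0 ht0
  by_contra hcon
  push_neg at hcon
  -- the set where f ≤ -lam, within [0, t0]
  set S : Set ℝ := Set.Icc 0 t0 ∩ f ⁻¹' Set.Iic (-lam) with hSdef
  have hS0 : (0:ℝ) ∈ S := ⟨⟨le_refl 0, ht0⟩, h0⟩
  have hfc : ContinuousOn f (Set.Icc 0 t0) := fun u hu =>
    ((hf u hu.1).continuousAt).continuousWithinAt
  have hScl : IsClosed S := hfc.preimage_isClosed_of_isClosed isClosed_Icc isClosed_Iic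
  have hScpt : IsCompact S := isCompact_Icc.of_isClosed_subset hScl Set.inter_subset_left
  have hSne : S.Nonempty := ⟨0, hS0⟩
  have hsmem : sSup S ∈ S := hScpt.sSup_mem hSne
  set s := sSup S with hs
  have hs0 : 0 ≤ s := hsmem.1.1
  have hst0 : s ≤ t0 := hsmem.1.2
  have hfs : f s ≤ -lam := hsmem.2
  have hslt : s < t0 := lt_of_le_of_ne hst0 (by
    intro h; rw [h] at hfs; exact absurd hfs (not_le.2 hcon))
  have hbdd : BddAbove S := hScpt.bddAbove
  have hgt : ∀ u ∈ Set.Ioc s t0, -lam < f u := by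
    intro u hu
    by_contra h
    push_neg at h
    have : u ≤ s := le_csSup hbdd ⟨⟨hs0.trans hu.1.le, hu.2⟩, h⟩
    exact absurd hu.1 (not_lt.2 this)
  -- bound f on [s, t0]
  obtain ⟨M, hM, hMmax⟩ := isCompact_Icc.exists_isMaxOn ⟨s, le_refl s, hst0⟩
    (hfc.mono (Set.Icc_subset_Icc hs0 (le_refl t0)))
  set C := f M - lam with hC
  set φ : ℝ → ℝ := fun u => (f u + lam) * Real.exp (-C * u) with hφ
  have hdiff : ∀ u ∈ Set.Icc s t0,
      HasDerivAt φ ((deriv f u) * Real.exp (-C * u)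
        + (f u + lam) * (-C * Real.exp (-C * u))) u := by
    intro u hu
    have hu0 : 0 ≤ u := hs0.trans hu.1
    have hd : HasDerivAt f (deriv f u) u := (hf u hu0).hasDerivAt
    have he : HasDerivAt (fun v => Real.exp (-C * v)) (Real.exp (-C * u) * -C) u :=
      (Real.hasDerivAt_exp (-C * u)).comp u ((hasDerivAt_id u).const_mul (-C) |>.congr_deriv
        (by ring))
    have : HasDerivAt φ (deriv f u * Real.exp (-C * u) + (f u + lam) * (Real.exp (-C * u) * -C)) u :=
      (hd.add_const lam).mul he
    convert this using 1
    ring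
  have hcont : ContinuousOn φ (Set.Icc s t0) := fun u hu =>
    ((hdiff u hu).differentiableAt.continuousAt).continuousWithinAt
  have hderiv_le : ∀ u ∈ Set.Ioo s t0, deriv φ u ≤ 0 := by
    intro u hu
    have hu' : u ∈ Set.Icc s t0 := ⟨hu.1.le, hu.2.le⟩
    have hu0 : 0 ≤ u := hs0.trans hu.1.le
    rw [(hdiff u hu').deriv]
    have hg : 0 ≤ f u + lam := by
      have := hgt u ⟨hu.1, hu.2.le⟩; linarith
    have hfC : f u - lam ≤ C := by
      have hfu : f u ≤ f M := hMmax (show u ∈ Set.Icc s t0 from ⟨hu.1.le, hu.2.le⟩)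
      rw [hC]; linarith
    have hexp : 0 < Real.exp (-C * u) := Real.exp_pos _
    have h1 : deriv f u ≤ (f u + lam) * (f u - lam) := by
      have := hineq u hu0; nlinarith
    have h2 : (f u + lam) * (f u - lam) ≤ (f u + lam) * C :=
      mul_le_mul_of_nonneg_left hfC hg
    nlinarith [mul_le_mul_of_nonneg_right (h1.trans h2) hexp.le]
  have hanti : AntitoneOn φ (Set.Icc s t0) := by
    apply antitoneOn_of_deriv_nonpos (convex_Icc s t0) hcont
    · intro u hu
      rw [interior_Icc] at hu
      exact (hdiff u ⟨hu.1.le, hu.2.le⟩).differentiableAt.differentiableWithinAt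
    · intro u hu
      rw [interior_Icc] at hu
      exact hderiv_le u hu
  have h1 : φ t0 ≤ φ s := hanti ⟨le_refl s, hst0⟩ ⟨hst0, le_refl t0⟩ hst0
  have hφs : φ s ≤ 0 :=
    mul_nonpos_of_nonpos_of_nonneg (by linarith) (Real.exp_pos _).le
  have hφt0 : 0 < φ t0 :=
    mul_pos (by linarith) (Real.exp_pos _)
  linarith
end

section
/- Let λ ≥ 0 and let f : [0, ∞) → ℝ be differentiable with f'(t) ≤ f(t)² − λ² and f(0) < −λ. Then f(t) < −λ (strictly) for all t ≥ 0. -/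
/-- Strict version of Lemma 2 of the paper. -/
theorem stmt2 (lam : ℝ) (hlam : 0 ≤ lam) (f : ℝ → ℝ)
    (hf : ∀ t, 0 ≤ t → DifferentiableAt ℝ f t)
    (hineq : ∀ t, 0 ≤ t → deriv f t ≤ f t ^ 2 - lam ^ 2)
    (h0 : f 0 < -lam) :
    ∀ t, 0 ≤ t → f t < -lam := by
  intro t ht
  set ε : ℝ := (-lam - f 0) / 2 with hε
  have hε0 : 0 < ε := by simp [hε]; linarith
  set K : ℝ := 2 * lam + ε with hK
  have hK0 : 0 < K := by positivity
  set B : ℝ → ℝ := fun x => -lam - ε * Real.exp (-K * x) with hB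
  set B' : ℝ → ℝ := fun x => ε * K * Real.exp (-K * x) with hB'
  have hBd : ∀ x, HasDerivAt B (B' x) x := by
    intro x
    have : HasDerivAt (fun x => -K * x) (-K) x := by
      simpa using (hasDerivAt_id x).const_mul (-K)
    have := ((this.exp).const_mul ε).const_sub (-lam)
    have h2 : B' x = -(ε * (Real.exp (-K * x) * -K)) := by simp only [hB']; ring
    rw [h2]; exact this
  have key : ∀ ⦃x⦄, x ∈ Set.Icc (0:ℝ) t → f x ≤ B x := by
    apply image_le_of_deriv_right_lt_deriv_boundary (f' := deriv f)
    · intro x hx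
      exact ((hf x hx.1).continuousAt).continuousWithinAt
    · intro x hx
      exact ((hf x hx.1).hasDerivAt).hasDerivWithinAt
    · simp only [hB]
      rw [mul_zero, Real.exp_zero]
      simp [hε]; linarith
    · exact hBd
    · intro x hx hfB
      rcases eq_or_lt_of_le hx.1 with h | h
      · exfalso
        subst h
        simp only [hB] at hfB
        rw [mul_zero, Real.exp_zero, mul_one] at hfB
        rw [hε] at hfB
        linarith
      · have hexp : Real.exp (-K * x) < 1 := by
          apply Real.exp_lt_one_iff.mpr
          nlinarith
        have hexp0 : 0 < Real.exp (-K * x) := Real.exp_pos _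
        calc deriv f x ≤ f x ^ 2 - lam ^ 2 := hineq x hx.1
          _ = B x ^ 2 - lam ^ 2 := by rw [hfB]
          _ < B' x := by
              have heq : B' x - (B x ^ 2 - lam ^ 2) =
                  ε ^ 2 * Real.exp (-K * x) * (1 - Real.exp (-K * x)) := by
                simp only [hB, hB', hK]; ring
              nlinarith [mul_pos (mul_pos (mul_pos hε0 hε0) hexp0)
                (by linarith : (0:ℝ) < 1 - Real.exp (-K * x))]
  have := key (Set.right_mem_Icc.mpr ht)
  have : f t ≤ -lam - ε * Real.exp (-K * t) := this
  have hexp0 : 0 < Real.exp (-K * t) := Real.exp_pos _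
  nlinarith
end

section
/- Let κ, κ̄ : [0,s] → ℝ be continuous with κ ≤ κ̄, and u, ū positive solutions on (0,s] of u'' + κu = 0 and ū'' + κ̄ū = 0 with u(0) = ū(0), u'(0) ≥ ū'(0). Then the ratio t ↦ u(t)/ū(t) is nondecreasing on (0, s]. -/
/-- Monotonicity form of the Jacobi field comparison (Theorem 2 of the paper):
the ratio `u/ū` of the Jacobi fields is nondecreasing on `(0,s]`. -/
theorem stmt12 (s : ℝ) (hs : 0 < s) (κ κb u ub u' ub' u'' ub'' : ℝ → ℝ)
    (hκ : ContinuousOn κ (Set.Icc 0 s)) (hκb : ContinuousOn κb (Set.Icc 0 s))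
    (hle : ∀ t ∈ Set.Icc (0 : ℝ) s, κ t ≤ κb t)
    (hu : ∀ t, HasDerivAt u (u' t) t) (hu' : ∀ t, HasDerivAt u' (u'' t) t)
    (hub : ∀ t, HasDerivAt ub (ub' t) t) (hub' : ∀ t, HasDerivAt ub' (ub'' t) t)
    (hequ : ∀ t ∈ Set.Icc (0 : ℝ) s, u'' t + κ t * u t = 0)
    (hequb : ∀ t ∈ Set.Icc (0 : ℝ) s, ub'' t + κb t * ub t = 0)
    (hupos : ∀ t ∈ Set.Ioc (0 : ℝ) s, 0 < u t)
    (hubpos : ∀ t ∈ Set.Ioc (0 : ℝ) s, 0 < ub t)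
    (h00 : u 0 = ub 0) (h0' : ub' 0 ≤ u' 0) :
    MonotoneOn (fun t => u t / ub t) (Set.Ioc 0 s) := by
  set W : ℝ → ℝ := fun t => u' t * ub t - u t * ub' t with hWdef
  have hWd : ∀ t, HasDerivAt W (u'' t * ub t - u t * ub'' t) t := by
    intro t
    have h := ((hu' t).mul (hub t)).sub ((hu t).mul (hub' t))
    convert h using 1
    case e'_8 => rfl
    case e'_9 => ring
    all_goals rfl
  have hmem : Set.Ioc 0 s ∈ nhdsWithin (0:ℝ) (Set.Ioi 0) :=
    Ioc_mem_nhdsGT_of_mem (Set.mem_Ico.mpr ⟨le_refl 0, hs⟩)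
  have hu0 : 0 ≤ u 0 :=
    ge_of_tendsto ((hu 0).continuousAt.continuousWithinAt :
        ContinuousWithinAt u (Set.Ioi 0) 0)
      (Filter.mem_of_superset hmem fun x hx => (hupos x hx).le)
  -- W 0 ≥ 0
  have hW0 : 0 ≤ W 0 := by
    have : W 0 = u 0 * (u' 0 - ub' 0) := by
      simp only [hWdef]
      rw [h00]; ring
    rw [this]
    exact mul_nonneg hu0 (sub_nonneg.mpr h0')
  -- W is monotone on Icc 0 s
  have hWcont : Continuous W := by
    have : Differentiable ℝ W := fun t => (hWd t).differentiableAt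
    exact this.continuous
  have hWmono : MonotoneOn W (Set.Icc 0 s) := by
    apply monotoneOn_of_deriv_nonneg (convex_Icc 0 s) hWcont.continuousOn
      (fun t _ => (hWd t).differentiableAt.differentiableWithinAt)
    intro t ht
    rw [interior_Icc] at ht
    have htI : t ∈ Set.Icc 0 s := Set.mem_Icc_of_Ioo ht
    have htIoc : t ∈ Set.Ioc 0 s := ⟨ht.1, ht.2.le⟩
    rw [(hWd t).deriv]
    have e1 : u'' t = -(κ t * u t) := by linarith [hequ t htI]
    have e2 : ub'' t = -(κb t * ub t) := by linarith [hequb t htI]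
    rw [e1, e2]
    have : -(κ t * u t) * ub t - u t * -(κb t * ub t)
        = (κb t - κ t) * (u t * ub t) := by ring
    rw [this]
    exact mul_nonneg (sub_nonneg.mpr (hle t htI))
      (mul_nonneg (hupos t htIoc).le (hubpos t htIoc).le)
  have hWnonneg : ∀ t ∈ Set.Icc (0:ℝ) s, 0 ≤ W t := by
    intro t ht
    exact le_trans hW0 (hWmono (Set.left_mem_Icc.mpr hs.le) ht ht.1)
  -- ratio monotone
  apply monotoneOn_of_deriv_nonneg (convex_Ioc 0 s)
  · exact ContinuousOn.div (fun t _ => (hu t).continuousAt.continuousWithinAt)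
      (fun t _ => (hub t).continuousAt.continuousWithinAt)
      (fun t ht => (hubpos t ht).ne')
  · intro t ht
    rw [interior_Ioc] at ht
    have htIoc : t ∈ Set.Ioc 0 s := ⟨ht.1, ht.2.le⟩
    exact ((hu t).div (hub t) (hubpos t htIoc).ne').differentiableAt.differentiableWithinAt
  · intro t ht
    rw [interior_Ioc] at ht
    have htIoc : t ∈ Set.Ioc 0 s := ⟨ht.1, ht.2.le⟩
    have hd := (hu t).div (hub t) (hubpos t htIoc).ne'
    rw [show deriv (fun t => u t / ub t) t = _ from hd.deriv]
    apply div_nonneg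
    · exact hWnonneg t ⟨ht.1.le, ht.2.le⟩
    · positivity
end

section
/- Let S : [0, T) → Sym(m) be a differentiable family of symmetric matrices satisfying the Riccati equation S' + S² + R(t) = 0, where R(t) is symmetric with R(t) ≤ −k²·Id (as quadratic forms) for all t, and suppose S(0) ≥ δ·Id with 0 ≤ δ < k. Then S(t) ≥ δ·Id for all t ∈ [0, T) (i.e., all eigenvalues of S(t) remain ≥ δ). -/
open scoped RealInnerProductSpace
open Filter Topology Set

/-- A symmetric positive-semidefinite operator kills any vector on which its
quadratic form vanishes. -/
lemma riccati_psd_ker {m : ℕ}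
    (A : EuclideanSpace ℝ (Fin m) →L[ℝ] EuclideanSpace ℝ (Fin m))
    (hsym : ∀ x y : EuclideanSpace ℝ (Fin m), ⟪A x, y⟫ = ⟪x, A y⟫)
    (hpsd : ∀ y : EuclideanSpace ℝ (Fin m), (0:ℝ) ≤ ⟪A y, y⟫)
    {x : EuclideanSpace ℝ (Fin m)} (hx : ⟪A x, x⟫ = (0:ℝ)) : A x = 0 := by
  set y := A x with hy
  set b : ℝ := ⟪y, y⟫ with hb
  set c : ℝ := ⟪A y, y⟫ with hc
  have hc0 : 0 ≤ c := hpsd y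
  have key : ∀ t : ℝ, 0 ≤ 2 * t * b + t ^ 2 * c := by
    intro t
    have h := hpsd (x + t • y)
    have e1 : A (x + t • y) = A x + t • A y := by rw [map_add, map_smul]
    rw [e1, inner_add_left, inner_add_right, inner_add_right, real_inner_smul_left,
      real_inner_smul_left, real_inner_smul_right, real_inner_smul_right] at h
    have e2 : ⟪A y, x⟫ = b := by rw [hsym y x, ← hy, real_inner_comm]
    rw [hx, e2] at h
    have e3 : ⟪A x, y⟫ = b := by rw [← hy]
    rw [e3] at h
    nlinarith [h]
  have hc1 : (0:ℝ) < c + 1 := by linarith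
  set t : ℝ := -b / (c + 1) with ht
  have htc : t * (c + 1) = -b := by
    rw [ht]; field_simp
  have hbt : b = -(t * (c + 1)) := by linarith
  have h4 := key t
  rw [hbt] at h4
  have h5 : t ^ 2 * (c + 2) ≤ 0 := by nlinarith [h4]
  have ht0 : t = 0 := by nlinarith [sq_nonneg t]
  have hb0 : b = 0 := by rw [hbt, ht0]; ring
  have : ⟪y, y⟫ = (0:ℝ) := hb0
  exact inner_self_eq_zero.mp this

set_option maxHeartbeats 1000000 in
/-- The key comparison step: a strict sub-barrier level `δ' < δ` with `|δ'| < k`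
is never crossed. -/
lemma riccati_aux (m : ℕ) (T k δ δ' : ℝ) (hδ'δ : δ' < δ) (hk1 : -k < δ') (hk2 : δ' < k)
    (S S' R : ℝ → EuclideanSpace ℝ (Fin m) →L[ℝ] EuclideanSpace ℝ (Fin m))
    (hSderiv : ∀ t ∈ Set.Ico (0 : ℝ) T, HasDerivAt S (S' t) t)
    (hSsym : ∀ t ∈ Set.Ico (0 : ℝ) T,
      ∀ x y : EuclideanSpace ℝ (Fin m), ⟪S t x, y⟫ = ⟪x, S t y⟫)
    (hric : ∀ t ∈ Set.Ico (0 : ℝ) T, S' t + (S t).comp (S t) + R t = 0)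
    (hR : ∀ t ∈ Set.Ico (0 : ℝ) T,
      ∀ x : EuclideanSpace ℝ (Fin m), ⟪R t x, x⟫ ≤ -k ^ 2 * ‖x‖ ^ 2)
    (h0 : ∀ x : EuclideanSpace ℝ (Fin m), δ * ‖x‖ ^ 2 ≤ ⟪S 0 x, x⟫) :
    ∀ t ∈ Set.Ico (0 : ℝ) T,
      ∀ x : EuclideanSpace ℝ (Fin m), δ' * ‖x‖ ^ 2 ≤ ⟪S t x, x⟫ := by
  classical
  by_contra hcon
  push_neg at hcon
  obtain ⟨t₁, ht₁, x₁, hx₁⟩ := hcon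
  set B : Set ℝ := {t | t ∈ Set.Ico (0:ℝ) T ∧
      ∃ x : EuclideanSpace ℝ (Fin m), ⟪S t x, x⟫ < δ' * ‖x‖ ^ 2} with hBdef
  have hBne : B.Nonempty := ⟨t₁, ht₁, x₁, hx₁⟩
  have hBbd : BddBelow B := ⟨0, fun t ht => ht.1.1⟩
  set t₀ : ℝ := sInf B with ht₀def
  have ht₀0 : 0 ≤ t₀ := le_csInf hBne fun t ht => ht.1.1
  have ht₀T : t₀ < T := lt_of_le_of_lt (csInf_le hBbd ⟨ht₁, x₁, hx₁⟩) ht₁.2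
  have ht₀mem : t₀ ∈ Set.Ico (0:ℝ) T := ⟨ht₀0, ht₀T⟩
  have hT0 : (0:ℝ) < T := lt_of_le_of_lt ht₁.1 ht₁.2
  -- nonzero witness of badness gives nonzero vector
  have bad_ne : ∀ t ∈ B, ∀ x : EuclideanSpace ℝ (Fin m),
      ⟪S t x, x⟫ < δ' * ‖x‖ ^ 2 → x ≠ 0 := by
    intro t ht x hx h0x
    rw [h0x] at hx; simp at hx
  -- points strictly below t₀ are good
  have hgood : ∀ t, 0 ≤ t → t < t₀ → ∀ y : EuclideanSpace ℝ (Fin m),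
      δ' * ‖y‖ ^ 2 ≤ ⟪S t y, y⟫ := by
    intro t ht0 htlt y
    by_contra hbad
    push_neg at hbad
    have : t ∈ B := ⟨⟨ht0, htlt.trans ht₀T⟩, y, hbad⟩
    exact absurd (csInf_le hBbd this) (not_le.mpr htlt)
  -- S is continuous at every point of [0, T)
  have hScont : ∀ t ∈ Set.Ico (0:ℝ) T, ContinuousAt S t :=
    fun t ht => (hSderiv t ht).continuousAt
  -- operator-norm control of quadratic forms
  have quad_bound : ∀ (A A' : EuclideanSpace ℝ (Fin m) →L[ℝ] EuclideanSpace ℝ (Fin m))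
      (y : EuclideanSpace ℝ (Fin m)), ⟪A y, y⟫ - ⟪A' y, y⟫ ≤ ‖A - A'‖ * ‖y‖ ^ 2 := by
    intro A A' y
    have h1 : ⟪A y, y⟫ - ⟪A' y, y⟫ = ⟪(A - A') y, y⟫ := by
      rw [ContinuousLinearMap.sub_apply, inner_sub_left]
    rw [h1]
    calc ⟪(A - A') y, y⟫ ≤ ‖(A - A') y‖ * ‖y‖ := real_inner_le_norm _ _
      _ ≤ (‖A - A'‖ * ‖y‖) * ‖y‖ := by
          have := (A - A').le_opNorm y
          exact mul_le_mul_of_nonneg_right this (norm_nonneg y)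
      _ = ‖A - A'‖ * ‖y‖ ^ 2 := by ring
  -- t₀ is positive
  have ht₀pos : 0 < t₀ := by
    have hc0 : ContinuousAt S 0 := hScont 0 ⟨le_refl 0, hT0⟩
    rw [Metric.continuousAt_iff] at hc0
    obtain ⟨ε, hε, hεc⟩ := hc0 (δ - δ') (by linarith)
    have hεB : ∀ t ∈ B, ε ≤ t := by
      intro t ht
      by_contra hlt
      push_neg at hlt
      obtain ⟨⟨ht0, htT⟩, x, hx⟩ := ht
      have hxne : x ≠ 0 := bad_ne t ⟨⟨ht0, htT⟩, x, hx⟩ x hx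
      have hxn : 0 < ‖x‖ ^ 2 := pow_pos (norm_pos_iff.mpr hxne) 2
      have hd : dist t (0:ℝ) < ε := by
        rw [Real.dist_eq, sub_zero, abs_of_nonneg ht0]; exact hlt
      have hSd : ‖S t - S 0‖ < δ - δ' := by
        have := hεc hd
        rwa [dist_eq_norm] at this
      have h2 : ⟪S 0 x, x⟫ - ⟪S t x, x⟫ ≤ ‖S 0 - S t‖ * ‖x‖ ^ 2 := quad_bound _ _ x
      rw [norm_sub_rev] at h2
      have h3 := h0 x
      nlinarith [h2, h3, hx, hSd, hxn]
    have : ε ≤ t₀ := le_csInf hBne hεB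
    linarith
  -- positive semidefiniteness at t₀ (limit from the left)
  have hpsd : ∀ y : EuclideanSpace ℝ (Fin m), δ' * ‖y‖ ^ 2 ≤ ⟪S t₀ y, y⟫ := by
    intro y
    have hcy : ContinuousAt (fun t => ⟪S t y, y⟫) t₀ := by
      have h1 : ContinuousAt (fun t => S t y) t₀ :=
        ((ContinuousLinearMap.apply ℝ (EuclideanSpace ℝ (Fin m)) y).continuous.continuousAt).comp
          (hScont t₀ ht₀mem)
      exact h1.inner continuousAt_const
    have htend : Tendsto (fun t => ⟪S t y, y⟫) (𝓝[<] t₀) (𝓝 ⟪S t₀ y, y⟫) :=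
      hcy.tendsto.mono_left nhdsWithin_le_nhds
    refine ge_of_tendsto htend ?_
    have hIoo : Set.Ioo (0:ℝ) t₀ ∈ 𝓝[<] t₀ :=
      Ioo_mem_nhdsLT_of_mem ⟨ht₀pos, le_refl t₀⟩
    filter_upwards [hIoo] with t ht
    exact hgood t ht.1.le ht.2 y
  -- a unit minimizer of the Rayleigh quotient at t₀
  have hsphne : (Metric.sphere (0 : EuclideanSpace ℝ (Fin m)) 1).Nonempty := by
    have hxne : x₁ ≠ 0 := bad_ne t₁ ⟨ht₁, x₁, hx₁⟩ x₁ hx₁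
    refine ⟨‖x₁‖⁻¹ • x₁, ?_⟩
    rw [mem_sphere_zero_iff_norm, norm_smul, norm_inv, norm_norm]
    exact inv_mul_cancel₀ (norm_ne_zero_iff.mpr hxne)
  have hgcont : Continuous fun y : EuclideanSpace ℝ (Fin m) => (⟪S t₀ y, y⟫ : ℝ) :=
    (S t₀).continuous.inner continuous_id
  obtain ⟨x, hxsph, hxmin⟩ := (isCompact_sphere (0 : EuclideanSpace ℝ (Fin m)) 1).exists_isMinOn
    hsphne hgcont.continuousOn
  have hxnorm : ‖x‖ = 1 := mem_sphere_zero_iff_norm.mp hxsph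
  -- the minimum value is ≤ δ'
  have hmin_le : ⟪S t₀ x, x⟫ ≤ δ' := by
    refine le_of_forall_pos_le_add ?_
    intro ε hε
    have hct₀ : ContinuousAt S t₀ := hScont t₀ ht₀mem
    rw [Metric.continuousAt_iff] at hct₀
    obtain ⟨η, hη, hηc⟩ := hct₀ ε hε
    obtain ⟨t, htB, htlt⟩ := exists_lt_of_csInf_lt hBne (show sInf B < t₀ + η by
      rw [← ht₀def]; linarith)
    obtain ⟨⟨ht0, htT⟩, z, hz⟩ := htB
    have hzne : z ≠ 0 := bad_ne t ⟨⟨ht0, htT⟩, z, hz⟩ z hz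
    have hznorm : (0:ℝ) < ‖z‖ := norm_pos_iff.mpr hzne
    have hzne' : ‖z‖ ≠ 0 := ne_of_gt hznorm
    set u : EuclideanSpace ℝ (Fin m) := ‖z‖⁻¹ • z with hu
    have hunorm : ‖u‖ = 1 := by
      rw [hu, norm_smul, norm_inv, norm_norm]
      exact inv_mul_cancel₀ hzne'
    have husph : u ∈ Metric.sphere (0 : EuclideanSpace ℝ (Fin m)) 1 :=
      mem_sphere_zero_iff_norm.mpr hunorm
    have huq : ⟪S t u, u⟫ < δ' := by
      rw [hu, map_smul, real_inner_smul_left, real_inner_smul_right]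
      have h2 : ‖z‖⁻¹ * (‖z‖⁻¹ * ⟪S t z, z⟫) < ‖z‖⁻¹ * (‖z‖⁻¹ * (δ' * ‖z‖ ^ 2)) := by
        have hpos : (0:ℝ) < ‖z‖⁻¹ := by positivity
        exact mul_lt_mul_of_pos_left (mul_lt_mul_of_pos_left hz hpos) hpos
      calc ‖z‖⁻¹ * (‖z‖⁻¹ * ⟪S t z, z⟫) < ‖z‖⁻¹ * (‖z‖⁻¹ * (δ' * ‖z‖ ^ 2)) := h2
        _ = δ' := by rw [sq]; field_simp
    have ht₀t : t₀ ≤ t := csInf_le hBbd ⟨⟨ht0, htT⟩, z, hz⟩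
    have hdt : dist t t₀ < η := by
      rw [Real.dist_eq, abs_of_nonneg (by linarith)]; linarith
    have hSd : ‖S t₀ - S t‖ < ε := by
      have := hηc hdt
      rw [dist_eq_norm, ← norm_sub_rev] at this
      exact this
    have h2 : ⟪S t₀ u, u⟫ - ⟪S t u, u⟫ ≤ ‖S t₀ - S t‖ * ‖u‖ ^ 2 := quad_bound _ _ u
    rw [hunorm] at h2
    have h3 : ⟪S t₀ x, x⟫ ≤ ⟪S t₀ u, u⟫ := hxmin husph
    nlinarith [h2, h3, huq, hSd]
  have hmin_ge : δ' ≤ ⟪S t₀ x, x⟫ := by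
    have := hpsd x
    rwa [hxnorm, one_pow, mul_one] at this
  have hmin_eq : ⟪S t₀ x, x⟫ = δ' := le_antisymm hmin_le hmin_ge
  -- x is an eigenvector of S t₀ with eigenvalue δ'
  have hSx : S t₀ x = δ' • x := by
    set A : EuclideanSpace ℝ (Fin m) →L[ℝ] EuclideanSpace ℝ (Fin m) :=
      S t₀ - δ' • ContinuousLinearMap.id ℝ (EuclideanSpace ℝ (Fin m)) with hA
    have hAapp : ∀ a : EuclideanSpace ℝ (Fin m), A a = S t₀ a - δ' • a := by
      intro a; simp [hA]
    have hAsym : ∀ a b : EuclideanSpace ℝ (Fin m), ⟪A a, b⟫ = ⟪a, A b⟫ := by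
      intro a b
      rw [hAapp, hAapp, inner_sub_left, inner_sub_right, real_inner_smul_left,
        real_inner_smul_right, hSsym t₀ ht₀mem a b]
    have hApsd : ∀ y : EuclideanSpace ℝ (Fin m), (0:ℝ) ≤ ⟪A y, y⟫ := by
      intro y
      rw [hAapp, inner_sub_left, real_inner_smul_left, real_inner_self_eq_norm_sq]
      have := hpsd y
      linarith
    have hAx : ⟪A x, x⟫ = (0:ℝ) := by
      rw [hAapp, inner_sub_left, real_inner_smul_left, real_inner_self_eq_norm_sq,
        hmin_eq, hxnorm]
      ring
    have hker := riccati_psd_ker A hAsym hApsd hAx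
    rw [hAapp] at hker
    rwa [sub_eq_zero] at hker
  -- the derivative of the quadratic form along x at t₀
  have hfd : HasDerivAt (fun t => ⟪S t x, x⟫) ⟪S' t₀ x, x⟫ t₀ := by
    have h1 : HasDerivAt (fun t => S t x) (S' t₀ x) t₀ := by
      have := (hSderiv t₀ ht₀mem).clm_apply (hasDerivAt_const t₀ x)
      simpa using this
    have h2 := HasDerivAt.inner ℝ h1 (hasDerivAt_const t₀ x)
    simpa using h2
  -- the derivative is strictly positive
  have hder_pos : (0:ℝ) < ⟪S' t₀ x, x⟫ := by
    have hricx : S' t₀ x + S t₀ (S t₀ x) + R t₀ x = 0 := by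
      have h := ContinuousLinearMap.ext_iff.mp (hric t₀ ht₀mem) x
      simpa using h
    have hSSx : S t₀ (S t₀ x) = (δ' * δ') • x := by
      rw [hSx, map_smul, hSx, smul_smul]
    have hiSS : ⟪S t₀ (S t₀ x), x⟫ = δ' * δ' := by
      rw [hSSx, real_inner_smul_left, real_inner_self_eq_norm_sq, hxnorm]
      ring
    have hRx : ⟪R t₀ x, x⟫ ≤ -k ^ 2 := by
      have := hR t₀ ht₀mem x
      rwa [hxnorm, one_pow, mul_one] at this
    have hS'x : S' t₀ x = -(S t₀ (S t₀ x)) - R t₀ x := by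
      have : S' t₀ x = -(S t₀ (S t₀ x) + R t₀ x) := by
        rw [eq_neg_iff_add_eq_zero, ← add_assoc]
        exact hricx
      rw [this, neg_add]
      abel
    have hiS' : ⟪S' t₀ x, x⟫ = -(δ' * δ') - ⟪R t₀ x, x⟫ := by
      rw [hS'x, inner_sub_left, inner_neg_left, hiSS]
    rw [hiS']
    nlinarith [hRx, mul_pos (by linarith : (0:ℝ) < k - δ') (by linarith : (0:ℝ) < k + δ')]
  -- slopes from the left are nonpositive, contradiction
  have htend : Tendsto (slope (fun t => ⟪S t x, x⟫) t₀) (𝓝[<] t₀) (𝓝 ⟪S' t₀ x, x⟫) := by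
    have h := hasDerivAt_iff_tendsto_slope.mp hfd
    exact h.mono_left (nhdsWithin_mono t₀ fun t ht => ne_of_lt ht)
  have hslope_le : ∀ᶠ t in 𝓝[<] t₀, slope (fun t => ⟪S t x, x⟫) t₀ t ≤ 0 := by
    have hIoo : Set.Ioo (0:ℝ) t₀ ∈ 𝓝[<] t₀ :=
      Ioo_mem_nhdsLT_of_mem ⟨ht₀pos, le_refl t₀⟩
    filter_upwards [hIoo] with t ht
    have hft : δ' ≤ ⟪S t x, x⟫ := by
      have := hgood t ht.1.le ht.2 x
      rwa [hxnorm, one_pow, mul_one] at this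
    rw [slope_def_field]
    apply div_nonpos_of_nonneg_of_nonpos
    · rw [hmin_eq]; linarith
    · linarith [ht.2]
  have : ⟪S' t₀ x, x⟫ ≤ 0 := le_of_tendsto htend hslope_le
  linarith


/-- Matrix Riccati comparison underlying Theorem 3 of the paper: if
`S' + S² + R(t) = 0` with `R(t) ≤ -k²·Id` and `S(0) ≥ δ·Id`, `0 ≤ δ < k`,
then `S(t) ≥ δ·Id` for all `t ∈ [0,T)`. -/
theorem stmt13 (m : ℕ) (T k δ : ℝ) (hδ : 0 ≤ δ) (hk : δ < k)
    (S S' R : ℝ → EuclideanSpace ℝ (Fin m) →L[ℝ] EuclideanSpace ℝ (Fin m))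
    (hSderiv : ∀ t ∈ Set.Ico (0 : ℝ) T, HasDerivAt S (S' t) t)
    (hSsym : ∀ t ∈ Set.Ico (0 : ℝ) T,
      ∀ x y : EuclideanSpace ℝ (Fin m), ⟪S t x, y⟫ = ⟪x, S t y⟫)
    (hRsym : ∀ t ∈ Set.Ico (0 : ℝ) T,
      ∀ x y : EuclideanSpace ℝ (Fin m), ⟪R t x, y⟫ = ⟪x, R t y⟫)
    (hric : ∀ t ∈ Set.Ico (0 : ℝ) T, S' t + (S t).comp (S t) + R t = 0)
    (hR : ∀ t ∈ Set.Ico (0 : ℝ) T,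
      ∀ x : EuclideanSpace ℝ (Fin m), ⟪R t x, x⟫ ≤ -k ^ 2 * ‖x‖ ^ 2)
    (h0 : ∀ x : EuclideanSpace ℝ (Fin m), δ * ‖x‖ ^ 2 ≤ ⟪S 0 x, x⟫) :
    ∀ t ∈ Set.Ico (0 : ℝ) T,
      ∀ x : EuclideanSpace ℝ (Fin m), δ * ‖x‖ ^ 2 ≤ ⟪S t x, x⟫ := by
  intro t ht x
  by_contra hlt
  push_neg at hlt
  have hxne : x ≠ 0 := by
    intro h
    rw [h] at hlt
    simp at hlt
  have hn : (0:ℝ) < ‖x‖ ^ 2 := pow_pos (norm_pos_iff.mpr hxne) 2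
  set a : ℝ := ⟪S t x, x⟫ / ‖x‖ ^ 2 with ha
  have haδ : a < δ := by
    rw [ha, div_lt_iff₀ hn]
    exact hlt
  set δ' : ℝ := (max a (-k) + δ) / 2 with hδ'
  have hmaxδ : max a (-k) < δ := max_lt haδ (by linarith)
  have hδ'δ : δ' < δ := by rw [hδ']; linarith
  have hk1 : -k < δ' := by
    have h1 : -k ≤ max a (-k) := le_max_right a (-k)
    rw [hδ']; linarith
  have hk2 : δ' < k := by linarith
  have haδ' : a < δ' := by
    have h1 : a ≤ max a (-k) := le_max_left a (-k)
    rw [hδ']; linarith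
  have hmain := riccati_aux m T k δ δ' hδ'δ hk1 hk2 S S' R hSderiv hSsym hric hR h0 t ht x
  have hax : a * ‖x‖ ^ 2 = ⟪S t x, x⟫ := by
    rw [ha, div_mul_cancel₀ _ (ne_of_gt hn)]
  nlinarith [hmain, hax, haδ', hn]
end
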